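/- Information cap from signal dilution: for a token y with p₀(y) > 0, let q(r) = μ(y,r)/p₀(y) be the bin posterior and let H(q) = −∑_{r=0}^{M−1} q(r)·log₂ q(r) be its Shannon entropy (with the convention 0·log₂ 0 = 0). Then the information gain Δ(y) := log₂ M − H(q) satisfies Δ(y) ≤ min{log₂ M, −log₂ p₀(y)}. -/

import Mathlib

/-! Every bin has width `1/M`, so the bin posterior `q(r) = μ(y,r)/p₀(y)` never exceeds
`1/(M p₀(y))`. Shannon entropy dominates min-entropy, hence `H(q) ≥ log₂ M + log₂ p₀(y)`;
together with `H(q) ≥ 0` this gives both caps on `Δ(y) = log₂ M - H(q)`. -/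

open MeasureTheory

/-- Cumulative sum of `p` over tokens strictly preceding `y`. -/
noncomputable def cdfBefore {V : Type*} [Fintype V] [LinearOrder V] (p : V → ℝ) (y : V) : ℝ :=
  ∑ z ∈ Finset.univ.filter (fun z => z < y), p z

/-- The CDF interval `I(y) = [F(y), F(y) + p(y))` of token `y`. -/
noncomputable def tokenInterval {V : Type*} [Fintype V] [LinearOrder V] (p : V → ℝ) (y : V) :
    Set ℝ :=
  Set.Ico (cdfBefore p y) (cdfBefore p y + p y)

/-- The `r`-th equal-width quantile bin `B_r = [r/M, (r+1)/M)`. -/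
noncomputable def quantileBin (M : ℕ) (r : ℕ) : Set ℝ :=
  Set.Ico ((r : ℝ) / M) (((r : ℝ) + 1) / M)

/-- Overlap mass `μ(y, r) = λ(I(y) ∩ B_r)`. -/
noncomputable def overlapMass {V : Type*} [Fintype V] [LinearOrder V] (p : V → ℝ) (M : ℕ)
    (y : V) (r : ℕ) : ℝ :=
  (volume (tokenInterval p y ∩ quantileBin M r)).toReal

open Finset Real Set

theorem sum_mul_logb_le_logb_of_le {ι : Type*} (s : Finset ι) {q : ι → ℝ} {b c : ℝ}
    (hb : 1 < b) (hq : ∀ i ∈ s, 0 ≤ q i) (hsum : ∑ i ∈ s, q i = 1)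
    (hc : ∀ i ∈ s, q i ≤ c) :
    ∑ i ∈ s, q i * logb b (q i) ≤ logb b c := by
  calc ∑ i ∈ s, q i * logb b (q i) ≤ ∑ i ∈ s, q i * logb b c := by
        refine sum_le_sum fun i hi => ?_
        rcases (hq i hi).eq_or_lt with h | h
        · simp [← h]
        · exact mul_le_mul_of_nonneg_left (logb_le_logb_of_le hb h (hc i hi)) h.le
    _ = logb b c := by rw [← sum_mul, hsum, one_mul]

theorem sum_mul_logb_nonpos {ι : Type*} (s : Finset ι) {q : ι → ℝ} {b : ℝ} (hb : 1 < b)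
    (hq : ∀ i ∈ s, 0 ≤ q i) (hsum : ∑ i ∈ s, q i = 1) :
    ∑ i ∈ s, q i * logb b (q i) ≤ 0 := by
  have hle1 : ∀ i ∈ s, q i ≤ 1 := fun i hi => hsum ▸ single_le_sum hq hi
  simpa only [logb_one] using sum_mul_logb_le_logb_of_le s hb hq hsum hle1

theorem pairwise_disjoint_quantileBin (M : ℕ) :
    Pairwise (Function.onFun Disjoint (quantileBin M)) := by
  have hmono : Monotone fun n : ℕ => (n : ℝ) / M := fun m n h =>
    div_le_div_of_nonneg_right (Nat.cast_le.2 h) M.cast_nonneg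
  have := hmono.pairwise_disjoint_on_Ico_succ
  simp only [Order.succ_eq_add_one, Nat.cast_add_one] at this
  exact this

theorem Ico_zero_one_subset_biUnion_quantileBin {M : ℕ} (hM : M ≠ 0) :
    Ico (0 : ℝ) 1 ⊆ ⋃ r ∈ range M, quantileBin M r := by
  simpa [quantileBin, hM] using Ico_subset_biUnion_Ico M fun n : ℕ => (n : ℝ) / M

theorem volume_quantileBin (M r : ℕ) :
    volume (quantileBin M r) = ENNReal.ofReal (M : ℝ)⁻¹ := by
  rw [quantileBin, Real.volume_Ico]
  ring_nf

theorem sum_volume_inter_quantileBin {S : Set ℝ} (hS : MeasurableSet S) (hS01 : S ⊆ Ico 0 1)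
    {M : ℕ} (hM : M ≠ 0) :
    ∑ r ∈ range M, volume (S ∩ quantileBin M r) = volume S := by
  rw [← measure_biUnion_finset (fun a _ b _ hab => (pairwise_disjoint_quantileBin M hab).mono
      inter_subset_right inter_subset_right) fun r _ => hS.inter measurableSet_Ico,
    ← inter_iUnion₂, inter_eq_left.2 (hS01.trans (Ico_zero_one_subset_biUnion_quantileBin hM))]

section Token

variable {V : Type*} [Fintype V] [LinearOrder V] {p : V → ℝ}

theorem cdfBefore_nonneg (hp : ∀ y, 0 ≤ p y) (y : V) : 0 ≤ cdfBefore p y :=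
  sum_nonneg fun z _ => hp z

theorem cdfBefore_add_le_one (hp : ∀ y, 0 ≤ p y) (hsum : ∑ y, p y = 1) (y : V) :
    cdfBefore p y + p y ≤ 1 := by
  have hy : y ∉ univ.filter (· < y) := by simp
  rw [cdfBefore, add_comm, ← sum_insert hy, ← hsum]
  exact sum_le_sum_of_subset_of_nonneg (subset_univ _) fun z _ _ => hp z

theorem tokenInterval_subset_Ico (hp : ∀ y, 0 ≤ p y) (hsum : ∑ y, p y = 1) (y : V) :
    tokenInterval p y ⊆ Ico 0 1 :=
  Ico_subset_Ico (cdfBefore_nonneg hp y) (cdfBefore_add_le_one hp hsum y)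

theorem volume_tokenInterval (p : V → ℝ) (y : V) :
    volume (tokenInterval p y) = ENNReal.ofReal (p y) := by
  rw [tokenInterval, Real.volume_Ico, add_sub_cancel_left]

theorem sum_overlapMass (hp : ∀ y, 0 ≤ p y) (hsum : ∑ y, p y = 1) {M : ℕ} (hM : M ≠ 0)
    (y : V) : ∑ r ∈ range M, overlapMass p M y r = p y := by
  have hfin : ∀ r ∈ range M, volume (tokenInterval p y ∩ quantileBin M r) ≠ ⊤ :=
    fun r _ => ne_top_of_le_ne_top (volume_tokenInterval p y ▸ ENNReal.ofReal_ne_top)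
      (measure_mono inter_subset_left)
  simp only [overlapMass]
  rw [← ENNReal.toReal_sum hfin,
    sum_volume_inter_quantileBin (S := tokenInterval p y) measurableSet_Ico
      (tokenInterval_subset_Ico hp hsum y) hM,
    volume_tokenInterval, ENNReal.toReal_ofReal (hp y)]

theorem overlapMass_le_inv (p : V → ℝ) (M : ℕ) (y : V) (r : ℕ) :
    overlapMass p M y r ≤ (M : ℝ)⁻¹ :=
  ENNReal.toReal_le_of_le_ofReal (inv_nonneg.2 M.cast_nonneg)
    (volume_quantileBin M r ▸ measure_mono inter_subset_right)

noncomputable def binPosterior (p : V → ℝ) (M : ℕ) (y : V) (r : ℕ) : ℝ :=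
  overlapMass p M y r / p y

theorem binPosterior_nonneg (hy : 0 ≤ p y) (M : ℕ) (r : ℕ) : 0 ≤ binPosterior p M y r :=
  div_nonneg ENNReal.toReal_nonneg hy

theorem sum_binPosterior (hp : ∀ y, 0 ≤ p y) (hsum : ∑ y, p y = 1) {M : ℕ} (hM : M ≠ 0)
    (hy : 0 < p y) : ∑ r ∈ range M, binPosterior p M y r = 1 := by
  simp only [binPosterior]
  rw [← sum_div, sum_overlapMass hp hsum hM y, div_self hy.ne']

theorem binPosterior_le_inv (hy : 0 < p y) (M : ℕ) (r : ℕ) :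
    binPosterior p M y r ≤ (M * p y)⁻¹ := by
  rw [mul_inv, ← div_eq_mul_inv]
  exact div_le_div_of_nonneg_right (overlapMass_le_inv p M y r) hy.le

end Token

/-- information cap from signal dilution: for a token `y` with `p₀ y > 0`,
let `q(r) = μ(y, r)/p₀(y)` be the bin posterior and
`H(q) = −∑_{r<M} q(r) · log₂ q(r)` its Shannon entropy (with `0 · log₂ 0 = 0`, which is
automatic since `Real.logb 2 0 = 0`). Then the information gain
`Δ(y) = log₂ M − H(q)` satisfies `Δ(y) ≤ min {log₂ M, −log₂ p₀(y)}`. -/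
theorem information_cap {V : Type*} [Fintype V] [LinearOrder V]
    (p₀ : V → ℝ) (hnn : ∀ y, 0 ≤ p₀ y) (hsum : ∑ y, p₀ y = 1)
    (M : ℕ) (hM : 1 ≤ M)
    (y : V) (hy : 0 < p₀ y) :
    Real.logb 2 M -
        (-∑ r ∈ Finset.range M,
            (overlapMass p₀ M y r / p₀ y) * Real.logb 2 (overlapMass p₀ M y r / p₀ y)) ≤
      min (Real.logb 2 M) (-Real.logb 2 (p₀ y)) := by
  change logb 2 M - -∑ r ∈ range M, binPosterior p₀ M y r * logb 2 (binPosterior p₀ M y r)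
    ≤ _
  have hM0 : M ≠ 0 := Nat.one_le_iff_ne_zero.1 hM
  have hq0 : ∀ r ∈ range M, 0 ≤ binPosterior p₀ M y r :=
    fun r _ => binPosterior_nonneg hy.le M r
  have hq1 := sum_binPosterior hnn hsum hM0 hy
  refine le_min ?_ ?_
  · linarith [sum_mul_logb_nonpos (range M) one_lt_two hq0 hq1]
  · have hmin := sum_mul_logb_le_logb_of_le (range M) one_lt_two hq0 hq1 fun r _ =>
      binPosterior_le_inv hy M r
    rw [logb_inv, logb_mul (by positivity) hy.ne'] at hmin
    linarith
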